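/- Let A be a reduced commutative ring, n ≥ 2, and B = A[x]/(x^n). An A-algebra endomorphism of B sending x to a₁x + a₂x² + … + a_{n-1}x^{n-1} is an automorphism if and only if a₁ is a unit of A. Hence the A-algebra automorphisms of B are in bijection with A^× × A^{n-2}. -/

import Mathlib

/-!
Let `r` be the class of `X` in `A[X]/(Xⁿ)` and `ψ` an endomorphism with `ψ r = f`, where `f` has
no constant term. In the basis `1, r, …, rⁿ⁻¹` the `j`-th column of `ψ` holds the coefficients of
`fʲ = a₁ʲ rʲ + (higher terms)`, so the matrix is triangular with determinant `∏ⱼ a₁ʲ`, and `ψ`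
is bijective iff `a₁` is a unit.

An endomorphism is determined by `ψ r`, which may be any `f` with `fⁿ = 0`. The constant term of
`fⁿ` is `a₀ⁿ`, so over a reduced ring these are exactly the `f` with `a₀ = 0`; automorphisms
therefore correspond to the vectors `(a₁, …, aₙ₋₁)` with `a₁` a unit.
-/

open Polynomial

namespace Polynomial

section CommSemiring

variable {R : Type*} [CommSemiring R] {p : R[X]}

theorem coeff_pow_eq_zero_of_lt (hp : p.coeff 0 = 0) {i j : ℕ} (hij : i < j) :
    (p ^ j).coeff i = 0 :=
  X_pow_dvd_iff.mp (pow_dvd_pow_of_dvd (X_dvd_iff.mpr hp) j) i hij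

theorem coeff_pow_self (hp : p.coeff 0 = 0) (j : ℕ) : (p ^ j).coeff j = p.coeff 1 ^ j := by
  obtain ⟨q, rfl⟩ := X_dvd_iff.mpr hp
  rw [mul_pow, coeff_X_pow_mul', if_pos le_rfl, Nat.sub_self, coeff_zero_eq_eval_zero,
    eval_pow, ← coeff_zero_eq_eval_zero, coeff_X_mul]

end CommSemiring

theorem coeff_modByMonic_X_pow {R : Type*} [Ring R] (p : R[X]) {i n : ℕ} (hi : i < n) :
    (p %ₘ X ^ n).coeff i = p.coeff i := by
  rw [modByMonic_eq_sub_mul_div, coeff_sub, coeff_X_pow_mul', if_neg (by omega), sub_zero]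

theorem coeff_sum_fin_C_mul_X_pow {R : Type*} [Semiring R] {n : ℕ} (c : Fin n → R)
    (i : Fin n) : (∑ j : Fin n, C (c j) * X ^ (j : ℕ)).coeff i = c i := by
  simp [Fin.val_inj]

end Polynomial

noncomputable def Fin.piZeroUnitEquiv (M : Type*) [Zero M] [Monoid M] (m : ℕ) :
    {c : Fin (m + 2) → M // c 0 = 0 ∧ IsUnit (c 1)} ≃ Mˣ × (Fin m → M) where
  toFun c := (c.2.2.unit, Fin.tail (Fin.tail c.1))
  invFun p := ⟨Fin.cons 0 (Fin.cons (p.1 : M) p.2), by simp⟩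
  left_inv := fun ⟨c, h0, h1⟩ ↦ by
    ext i
    refine i.cases (by simp [h0]) (fun j ↦ j.cases ?_ fun k ↦ ?_) <;> simp [Fin.tail]
  right_inv p := by ext <;> simp

namespace AdjoinRoot

variable {A : Type*} [CommRing A] {n : ℕ}

theorem root_X_pow_pow_self : root (X ^ n : A[X]) ^ n = 0 := by
  rw [← mk_X, ← map_pow, mk_self]

theorem mk_pow_self_eq_zero {P : A[X]} (h0 : P.coeff 0 = 0) : mk (X ^ n) P ^ n = 0 := by
  rw [← map_pow, mk_eq_zero]
  exact pow_dvd_pow_of_dvd (X_dvd_iff.mpr h0) n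

variable [Nontrivial A]

noncomputable def monomialBasis (A : Type*) [CommRing A] [Nontrivial A] (n : ℕ) :
    Module.Basis (Fin n) A (AdjoinRoot (X ^ n : A[X])) :=
  (powerBasis' (monic_X_pow n)).basis.reindex (finCongr (natDegree_X_pow n))

theorem monomialBasis_apply (i : Fin n) :
    monomialBasis A n i = root (X ^ n : A[X]) ^ (i : ℕ) := by
  rw [monomialBasis, Module.Basis.reindex_apply, PowerBasis.basis_eq_pow, powerBasis'_gen]
  rfl

theorem monomialBasis_repr_mk (p : A[X]) (i : Fin n) :
    (monomialBasis A n).repr (mk _ p) i = p.coeff i := by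
  rw [monomialBasis, Module.Basis.repr_reindex_apply]
  exact coeff_modByMonic_X_pow p i.2

section Endomorphism

variable (ψ : AdjoinRoot (X ^ n : A[X]) →ₐ[A] AdjoinRoot (X ^ n : A[X])) {P : A[X]}
  (hP : ψ (root _) = mk _ P)
include hP

theorem toMatrix_monomialBasis (i j : Fin n) :
    LinearMap.toMatrix (monomialBasis A n) (monomialBasis A n) ψ.toLinearMap i j =
      (P ^ (j : ℕ)).coeff i := by
  rw [LinearMap.toMatrix_apply, AlgHom.toLinearMap_apply, monomialBasis_apply, map_pow, hP,
    ← map_pow, monomialBasis_repr_mk]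

theorem det_eq_prod_coeff_one_pow (h0 : P.coeff 0 = 0) :
    LinearMap.det ψ.toLinearMap = ∏ i : Fin n, P.coeff 1 ^ (i : ℕ) := by
  rw [← LinearMap.det_toMatrix (monomialBasis A n), Matrix.det_of_isLowerTriangular]
  · simp_rw [toMatrix_monomialBasis ψ hP, coeff_pow_self h0]
  · intro i j hij
    rw [toMatrix_monomialBasis ψ hP]
    exact coeff_pow_eq_zero_of_lt h0 hij

theorem bijective_iff_isUnit_coeff_one (hn : 2 ≤ n) (h0 : P.coeff 0 = 0) :
    Function.Bijective ψ ↔ IsUnit (P.coeff 1) := by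
  have := (monic_X_pow (R := A) n).free_adjoinRoot
  have := (monic_X_pow (R := A) n).finite_adjoinRoot
  rw [← AlgHom.coe_toLinearMap, ← Module.End.isUnit_iff, LinearMap.isUnit_iff_isUnit_det,
    det_eq_prod_coeff_one_pow ψ hP h0, IsUnit.prod_univ_iff]
  exact ⟨fun h ↦ by simpa using h ⟨1, hn⟩, fun h i ↦ h.pow _⟩

end Endomorphism

theorem bijective_iff_isUnit_of_algEquiv {B : Type*} [CommRing B] [Algebra A B] (hn : 2 ≤ n)
    (e : B ≃ₐ[A] AdjoinRoot (X ^ n : A[X])) {x : B} (hx : e x = root _) (φ : B →ₐ[A] B)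
    {a : Fin n → A} (h0 : a ⟨0, Nat.zero_lt_of_lt hn⟩ = 0)
    (hφ : φ x = ∑ j : Fin n, algebraMap A B (a j) * x ^ (j : ℕ)) :
    Function.Bijective φ ↔ IsUnit (a ⟨1, hn⟩) := by
  set P : A[X] := ∑ j : Fin n, C (a j) * X ^ (j : ℕ)
  have hP : e.arrowCongr e φ (root _) = mk _ P := by
    rw [AlgEquiv.arrowCongr_apply, AlgHom.comp_apply, AlgHom.comp_apply, AlgEquiv.coe_toAlgHom,
      AlgEquiv.coe_toAlgHom, e.symm_apply_eq.mpr hx.symm, hφ, map_sum, map_sum]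
    refine Finset.sum_congr rfl fun j _ ↦ ?_
    rw [map_mul, map_pow, AlgEquiv.commutes, hx, map_mul, map_pow, mk_C, mk_X, algebraMap_eq]
  have hP0 : P.coeff 0 = 0 := (coeff_sum_fin_C_mul_X_pow a _).trans h0
  have hP1 : P.coeff 1 = a ⟨1, hn⟩ := coeff_sum_fin_C_mul_X_pow a ⟨1, hn⟩
  rw [← EquivLike.comp_bijective _ e, ← EquivLike.bijective_comp e.symm, ← hP1]
  exact bijective_iff_isUnit_coeff_one _ hP hn hP0

theorem exists_algEquiv_root_eq_mk (hn : 2 ≤ n) {P : A[X]} (h0 : P.coeff 0 = 0)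
    (h1 : IsUnit (P.coeff 1)) :
    ∃ σ : AdjoinRoot (X ^ n : A[X]) ≃ₐ[A] AdjoinRoot (X ^ n : A[X]), σ (root _) = mk _ P := by
  let ψ := liftAlgHom (X ^ n) (Algebra.ofId A _) (mk _ P)
    (by rw [eval₂_X_pow]; exact mk_pow_self_eq_zero h0)
  have hψ : ψ (root _) = mk _ P := liftAlgHom_root ..
  exact ⟨.ofBijective ψ ((bijective_iff_isUnit_coeff_one ψ hψ hn h0).mpr h1), hψ⟩

variable [IsReduced A]

theorem coeff_zero_eq_zero_of_mk_pow_self_eq_zero (hn : 0 < n) {P : A[X]}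
    (h : mk (X ^ n) P ^ n = 0) : P.coeff 0 = 0 := by
  have h' : (P ^ n).coeff 0 = 0 := by
    simpa [← map_pow, monomialBasis_repr_mk] using
      congrArg (fun q ↦ (monomialBasis A n).repr q ⟨0, hn⟩) h
  rw [coeff_zero_eq_eval_zero, eval_pow, ← coeff_zero_eq_eval_zero] at h'
  exact IsReduced.eq_zero _ ⟨n, h'⟩

theorem repr_algEquiv_root_zero_eq_zero_and_isUnit (m : ℕ)
    (σ : AdjoinRoot (X ^ (m + 2) : A[X]) ≃ₐ[A] AdjoinRoot (X ^ (m + 2) : A[X])) :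
    (monomialBasis A (m + 2)).repr (σ (root _)) 0 = 0 ∧
      IsUnit ((monomialBasis A (m + 2)).repr (σ (root _)) 1) := by
  obtain ⟨P, hP⟩ := mk_surjective (σ (root _))
  have h0 : P.coeff 0 = 0 := coeff_zero_eq_zero_of_mk_pow_self_eq_zero (n := m + 2) (by omega)
    (by rw [hP, ← map_pow, root_X_pow_pow_self, map_zero])
  rw [← hP, monomialBasis_repr_mk, monomialBasis_repr_mk, Fin.val_zero, Fin.val_one]
  exact ⟨h0, (bijective_iff_isUnit_coeff_one σ.toAlgHom hP.symm (Nat.le_add_left 2 m) h0).mp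
    σ.bijective⟩

noncomputable def algEquivEquivCoeffs (m : ℕ) :
    (AdjoinRoot (X ^ (m + 2) : A[X]) ≃ₐ[A] AdjoinRoot (X ^ (m + 2) : A[X])) ≃
      {c : Fin (m + 2) → A // c 0 = 0 ∧ IsUnit (c 1)} :=
  Equiv.ofBijective
    (fun σ ↦ ⟨(monomialBasis A (m + 2)).repr (σ (root _)),
      repr_algEquiv_root_zero_eq_zero_and_isUnit m σ⟩)
    ⟨fun σ τ h ↦ AlgEquiv.coe_toAlgHom_injective <| algHom_ext <|
      (monomialBasis A (m + 2)).repr.injective <| DFunLike.coe_injective <| congrArg Subtype.val h,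
    fun ⟨c, h0, h1⟩ ↦ by
      set P : A[X] := ∑ j : Fin (m + 2), C (c j) * X ^ (j : ℕ)
      have hPc (i : Fin (m + 2)) : P.coeff i = c i := coeff_sum_fin_C_mul_X_pow c i
      obtain ⟨σ, hσ⟩ := exists_algEquiv_root_eq_mk (Nat.le_add_left 2 m)
        (hPc 0 ▸ h0 : P.coeff 0 = 0) (hPc 1 ▸ h1)
      refine ⟨σ, Subtype.ext <| funext fun i ↦ ?_⟩
      change (monomialBasis A (m + 2)).repr (σ (root _)) i = c i
      rw [hσ, monomialBasis_repr_mk, hPc]⟩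

end AdjoinRoot

/-- For `A` reduced and `B = A[x]/(xⁿ)` (`n ≥ 2`): an `A`-algebra endomorphism sending `x`
to `a₁x + ⋯ + a_{n-1}x^{n-1}` is an automorphism iff `a₁` is a unit; hence the `A`-algebra
automorphisms of `B` are in bijection with `Aˣ × A^{n-2}`. -/
theorem stmt_5 (A : Type*) [CommRing A] [IsReduced A] (n : ℕ) (hn : 2 ≤ n)
    (B : Type*) [CommRing B] [Algebra A B]
    (e : B ≃ₐ[A] (Polynomial A ⧸ Ideal.span {(X : Polynomial A) ^ n}))
    (xB : B) (hx : e xB = Ideal.Quotient.mk _ (X : Polynomial A)) :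
    (∀ (φ : B →ₐ[A] B) (a : Fin n → A), a ⟨0, by omega⟩ = 0 →
      φ xB = ∑ j : Fin n, algebraMap A B (a j) * xB ^ (j : ℕ) →
        (Function.Bijective φ ↔ IsUnit (a ⟨1, by omega⟩))) ∧
    Nonempty ((B ≃ₐ[A] B) ≃ (Aˣ × (Fin (n - 2) → A))) := by
  rcases subsingleton_or_nontrivial A with hA | hA
  · have := Algebra.subsingleton A B
    exact ⟨fun φ a _ _ ↦ iff_of_true ⟨fun _ _ _ ↦ Subsingleton.elim _ _,
      fun y ↦ ⟨y, Subsingleton.elim _ _⟩⟩ (isUnit_of_subsingleton _),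
      ⟨equivOfSubsingletonOfSubsingleton (fun _ ↦ 1) (fun _ ↦ 1)⟩⟩
  refine ⟨fun φ a h0 hφ ↦ AdjoinRoot.bijective_iff_isUnit_of_algEquiv hn e hx φ h0 hφ, ?_⟩
  obtain ⟨m, rfl⟩ : ∃ m, n = m + 2 := ⟨n - 2, by omega⟩
  exact ⟨(AlgEquiv.autCongr e).toEquiv.trans
    ((AdjoinRoot.algEquivEquivCoeffs m).trans (Fin.piZeroUnitEquiv A m))⟩
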